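/- arXiv:2003.02870 — 4 statements merged into one kernel-verified Lean document; each statement's English description precedes it below -/
import Mathlib

section
/- For real numbers a, b with c = -a·b, the 3×3 matrix Φ₁ = (I - H₁)⁻¹ Σ₁ (I - H₁)⁻ᵀ, where H₁ has entries H₁(2,1)=a, H₁(3,1)=c, H₁(3,2)=b (all other entries zero) and Σ₁ = I, equals the matrix Φ₂ = (I - H₂)⁻¹ Σ₂ (I - H₂)⁻ᵀ, where H₂ has entries H₂(2,1)=a, H₂(2,3)=b/(b²+1) (all other entries zero) and Σ₂ = diag(1, 1/(b²+1), b²+1). Both equal the matrix with rows (1, a, 0), (a, a²+1, b), (0, b, b²+1). -/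
open Matrix

/-- Two different 3-node network structures produce the same output power
spectral density: with `c = -a·b`, `Φ₁ = (I-H₁)⁻¹ Sig₁ (I-H₁)⁻ᵀ` equals
`Φ₂ = (I-H₂)⁻¹ Sig₂ (I-H₂)⁻ᵀ`, and both equal the displayed matrix. -/
theorem stmt_0 (a b c : ℝ) (hc : c = -(a * b))
    (H₁ H₂ Sig₁ Sig₂ Φ₁ Φ₂ : Matrix (Fin 3) (Fin 3) ℝ)
    (hH₁ : H₁ = !![0, 0, 0; a, 0, 0; c, b, 0])
    (hSig₁ : Sig₁ = 1)
    (hH₂ : H₂ = !![0, 0, 0; a, 0, b / (b ^ 2 + 1); 0, 0, 0])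
    (hSig₂ : Sig₂ = !![1, 0, 0; 0, 1 / (b ^ 2 + 1), 0; 0, 0, b ^ 2 + 1])
    (hΦ₁ : Φ₁ = (1 - H₁)⁻¹ * Sig₁ * ((1 - H₁)⁻¹)ᵀ)
    (hΦ₂ : Φ₂ = (1 - H₂)⁻¹ * Sig₂ * ((1 - H₂)⁻¹)ᵀ) :
    Φ₁ = Φ₂ ∧ Φ₂ = !![1, a, 0; a, a ^ 2 + 1, b; 0, b, b ^ 2 + 1] := by
  have hb : (b ^ 2 + 1 : ℝ) ≠ 0 := by positivity
  have h1 : (1 - H₁) = !![1, 0, 0; -a, 1, 0; -c, -b, 1] := by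
    subst hH₁
    ext i j
    fin_cases i <;> fin_cases j <;>
      simp [Matrix.one_apply, Matrix.sub_apply, Matrix.vecHead, Matrix.vecTail]
  have h2 : (1 - H₂) = !![1, 0, 0; -a, 1, -(b / (b ^ 2 + 1)); 0, 0, 1] := by
    subst hH₂
    ext i j
    fin_cases i <;> fin_cases j <;>
      simp [Matrix.one_apply, Matrix.sub_apply, Matrix.vecHead, Matrix.vecTail]
  have hi1 : (1 - H₁)⁻¹ = !![1, 0, 0; a, 1, 0; 0, b, 1] := by
    rw [h1]
    apply inv_eq_left_inv
    rw [Matrix.mul_fin_three, Matrix.one_fin_three]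
    norm_num [hc, mul_comm]
  have hi2 : (1 - H₂)⁻¹ = !![1, 0, 0; a, 1, b / (b ^ 2 + 1); 0, 0, 1] := by
    rw [h2]
    apply inv_eq_left_inv
    rw [Matrix.mul_fin_three, Matrix.one_fin_three]
    norm_num
  have e1 : Φ₁ = !![1, a, 0; a, a ^ 2 + 1, b; 0, b, b ^ 2 + 1] := by
    rw [hΦ₁, hi1, hSig₁, mul_one]
    rw [show (!![1, 0, 0; a, 1, 0; 0, b, 1] : Matrix (Fin 3) (Fin 3) ℝ)ᵀ
        = !![1, a, 0; 0, 1, b; 0, 0, 1] by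
      ext i j; fin_cases i <;> fin_cases j <;>
        simp [Matrix.vecHead, Matrix.vecTail]]
    ext i j
    fin_cases i <;> fin_cases j <;>
      simp [Matrix.mul_fin_three] <;> ring
  have e2 : Φ₂ = !![1, a, 0; a, a ^ 2 + 1, b; 0, b, b ^ 2 + 1] := by
    rw [hΦ₂, hi2, hSig₂]
    rw [show (!![1, 0, 0; a, 1, b / (b ^ 2 + 1); 0, 0, 1] : Matrix (Fin 3) (Fin 3) ℝ)ᵀ
        = !![1, a, 0; 0, 1, 0; 0, b / (b ^ 2 + 1), 1] by
      ext i j; fin_cases i <;> fin_cases j <;>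
        simp [Matrix.vecHead, Matrix.vecTail]]
    ext i j
    fin_cases i <;> fin_cases j <;>
      simp [Matrix.mul_fin_three] <;> field_simp <;> ring
  exact ⟨e1.trans e2.symm, e2⟩
end

section
/- For the matrix H₁ with H₁(2,1)=a, H₁(3,1)=-a·b, H₁(3,2)=b and noise covariance I, the (1,3) entry of the output covariance (I - H₁)⁻¹ (I - H₁)⁻ᵀ is zero, even though the (3,1) entry of H₁ is nonzero (when a·b ≠ 0). -/
open Matrix

/-- Path cancellation: with `H₁(2,1)=a, H₁(3,1)=-a·b, H₁(3,2)=b` and noise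
covariance `I`, the (1,3) entry of `(I-H₁)⁻¹ (I-H₁)⁻ᵀ` is zero even though
the (3,1) entry of `H₁` is nonzero (when `a·b ≠ 0`). -/
theorem stmt_1 (a b : ℝ) (hab : a * b ≠ 0)
    (H₁ : Matrix (Fin 3) (Fin 3) ℝ)
    (hH₁ : H₁ = !![0, 0, 0; a, 0, 0; -(a * b), b, 0]) :
    (((1 - H₁)⁻¹ * ((1 - H₁)⁻¹)ᵀ : Matrix (Fin 3) (Fin 3) ℝ)) 0 2 = 0 ∧ H₁ 2 0 ≠ 0 := by
  subst hH₁
  have h1 : (1 - !![0, 0, 0; a, 0, 0; -(a * b), b, 0] : Matrix (Fin 3) (Fin 3) ℝ)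
      = !![1, 0, 0; -a, 1, 0; a * b, -b, 1] := by
    ext i j
    fin_cases i <;> fin_cases j <;>
      simp [Matrix.sub_apply, Matrix.one_apply, Matrix.vecHead, Matrix.vecTail] <;> ring
  have hinv : (!![1, 0, 0; -a, 1, 0; a * b, -b, 1] : Matrix (Fin 3) (Fin 3) ℝ)⁻¹
      = !![1, 0, 0; a, 1, 0; 0, b, 1] := by
    apply Matrix.inv_eq_right_inv
    ext i j
    fin_cases i <;> fin_cases j <;>
      simp [Matrix.mul_apply, Fin.sum_univ_succ, Matrix.one_apply] <;> ring
  constructor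
  · rw [h1, hinv]
    simp [Matrix.mul_apply, Fin.sum_univ_succ, Matrix.vecHead, Matrix.vecTail]
  · have h : (!![0, 0, 0; a, 0, 0; -(a * b), b, 0] : Matrix (Fin 3) (Fin 3) ℝ) 2 0 = -(a * b) := by simp
    rw [h]
    exact neg_ne_zero.mpr hab
end

section
/- For the 4-node example with H a 4×4 real matrix having nonzero entries H(3,1) = -a, H(3,2) = b, H(4,1) = a, H(4,2) = b (a, b ≠ 0) and noise covariance I, the (1,2) entry of the inverse of the output covariance matrix Φ = (I-H)⁻¹(I-H)⁻ᵀ is zero. -/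
open Matrix

/-- In the 4-node example with `H(3,1)=-a, H(3,2)=b, H(4,1)=a, H(4,2)=b`
(`a,b ≠ 0`) and noise covariance `I`, the (1,2) entry of the inverse of the
output covariance `Φ = (I-H)⁻¹(I-H)⁻ᵀ` is zero: nodes 1 and 2 are Wiener
separated given the remaining nodes, so the coparent edge is missed. -/
theorem stmt_11 (a b : ℝ) (ha : a ≠ 0) (hb : b ≠ 0)
    (H Φ : Matrix (Fin 4) (Fin 4) ℝ)
    (hH : H = !![0, 0, 0, 0; 0, 0, 0, 0; -a, b, 0, 0; a, b, 0, 0])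
    (hΦ : Φ = (1 - H)⁻¹ * ((1 - H)⁻¹)ᵀ) :
    Φ⁻¹ 0 1 = 0 := by
  have hH2 : H * H = 0 := by
    subst hH
    ext i j
    fin_cases i <;> fin_cases j <;>
      simp [Matrix.mul_apply, Fin.sum_univ_four]
  have hHt2 : Hᵀ * Hᵀ = 0 := by
    rw [← Matrix.transpose_mul, hH2, Matrix.transpose_zero]
  have hinv : (1 - H)⁻¹ = 1 + H := by
    apply Matrix.inv_eq_right_inv
    have : (1 - H) * (1 + H) = 1 - H * H := by noncomm_ring
    rw [this, hH2, sub_zero]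
  have hinv2 : Φ⁻¹ = (1 - H)ᵀ * (1 - H) := by
    apply Matrix.inv_eq_right_inv
    rw [hΦ, hinv, Matrix.transpose_add, Matrix.transpose_one, Matrix.transpose_sub,
      Matrix.transpose_one]
    have e1 : (1 + Hᵀ) * (1 - Hᵀ) = 1 := by
      have : (1 + Hᵀ) * (1 - Hᵀ) = 1 - Hᵀ * Hᵀ := by noncomm_ring
      rw [this, hHt2, sub_zero]
    have e2 : (1 + H) * (1 - H) = 1 := by
      have : (1 + H) * (1 - H) = 1 - H * H := by noncomm_ring
      rw [this, hH2, sub_zero]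
    calc (1 + H) * (1 + Hᵀ) * ((1 - Hᵀ) * (1 - H))
        = (1 + H) * ((1 + Hᵀ) * (1 - Hᵀ)) * (1 - H) := by
          simp only [Matrix.mul_assoc]
      _ = 1 := by rw [e1, Matrix.mul_one, e2]
  rw [hinv2, hH]
  simp [Matrix.mul_apply, Matrix.sub_apply, Matrix.transpose_apply,
    Fin.sum_univ_four, Matrix.one_apply, Matrix.vecHead, Matrix.vecTail]
end

section
/- Let G be a directed graph with no 2-cycles and triangle-free skeleton, and suppose Ḡ satisfies skeleton(G) ⊆ Ḡ ⊆ moral(G). If an edge-removal procedure applied to the triangles of Ḡ removes exactly one edge from each triangle and never removes an edge of skeleton(G) from a triangle where the coparent edge is removable, then the resulting graph equals skeleton(G). -/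
/-- Directed graphs are binary relations `E : V → V → Prop`.
The skeleton of a directed graph: undirected graph forgetting orientations. -/
def skeleton {V : Type*} (E : V → V → Prop) : SimpleGraph V where
  Adj i j := i ≠ j ∧ (E i j ∨ E j i)
  symm := ⟨fun _ _ ⟨h, h2⟩ => ⟨h.symm, h2.symm⟩⟩
  loopless := ⟨fun _ ⟨h, _⟩ => h rfl⟩

/-- The moral graph: skeleton plus edges between coparents (vertices sharing a common child). -/
def moral {V : Type*} (E : V → V → Prop) : SimpleGraph V where
  Adj i j := i ≠ j ∧ (E i j ∨ E j i ∨ ∃ k, E i k ∧ E j k)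
  symm := ⟨fun _ _ ⟨h, h2⟩ => ⟨h.symm, by tauto⟩⟩
  loopless := ⟨fun _ ⟨h, _⟩ => h rfl⟩

/-- No 2-cycles (unidirectional): no pair connected by edges in both directions. -/
def No2Cycles {V : Type*} (E : V → V → Prop) : Prop := ∀ i j, E i j → ¬ E j i

/-- Triangle-freeness of an undirected graph: no three mutually adjacent vertices. -/
def TriFree {V : Type*} (G : SimpleGraph V) : Prop :=
  ∀ a b c : V, G.Adj a b → G.Adj b c → G.Adj a c → False

/-!
A skeleton edge `ij` lying in a triangle `ijk` of `Ḡ` is never removed: since the skeleton is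
triangle-free, one of `ik`, `jk` is not a skeleton edge, hence removable, and the triangle has
only one removable edge. Conversely, every non-skeleton edge of `Ḡ` is removable and lies in a
triangle, so it is removed.
-/

section EdgeRemoval

variable {V : Type*} {S Gbar : SimpleGraph V} {removable : V → V → Prop}

theorem not_removable_of_adj_of_triFree (hTF : TriFree S)
    (hfp : ∀ i j, Gbar.Adj i j → ¬ S.Adj i j → removable i j)
    {i j k : V} (hone : (removable i j ∧ ¬ removable j k ∧ ¬ removable i k) ∨
       (¬ removable i j ∧ removable j k ∧ ¬ removable i k) ∨
       (¬ removable i j ∧ ¬ removable j k ∧ removable i k))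
    (hij : S.Adj i j) (hik : Gbar.Adj i k) (hjk : Gbar.Adj j k) :
    ¬ removable i j := by
  have hother : removable j k ∨ removable i k := by
    by_cases hSik : S.Adj i k
    · by_cases hSjk : S.Adj j k
      · exact (hTF i k j hSik hSjk.symm hij).elim
      · exact .inl (hfp j k hjk hSjk)
    · exact .inr (hfp i k hik hSik)
  tauto

theorem adj_and_not_removable_in_triangle_iff (hTF : TriFree S) (hlow : S ≤ Gbar)
    (hfp : ∀ i j, Gbar.Adj i j → ¬ S.Adj i j → removable i j)
    (hone : ∀ i j k, Gbar.Adj i j → Gbar.Adj j k → Gbar.Adj i k →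
      ((removable i j ∧ ¬ removable j k ∧ ¬ removable i k) ∨
       (¬ removable i j ∧ removable j k ∧ ¬ removable i k) ∨
       (¬ removable i j ∧ ¬ removable j k ∧ removable i k)))
    (htri : ∀ i j, Gbar.Adj i j → ¬ S.Adj i j → ∃ k, Gbar.Adj i k ∧ Gbar.Adj j k)
    (i j : V) :
    (Gbar.Adj i j ∧ ¬ (removable i j ∧ ∃ k, Gbar.Adj i k ∧ Gbar.Adj j k)) ↔ S.Adj i j := by
  constructor
  · rintro ⟨hGij, hkept⟩
    by_contra hSij
    exact hkept ⟨hfp i j hGij hSij, htri i j hGij hSij⟩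
  · intro hSij
    refine ⟨hlow hSij, ?_⟩
    rintro ⟨hrij, k, hik, hjk⟩
    exact not_removable_of_adj_of_triFree hTF hfp (hone i j k (hlow hSij) hjk hik) hSij hik hjk
      hrij

end EdgeRemoval

theorem stmt_14_general {V : Type*} (E : V → V → Prop) (Gbar : SimpleGraph V)
    (removable : V → V → Prop)
    (hTF : TriFree (skeleton E))
    (hlow : skeleton E ≤ Gbar)
    (hfp : ∀ i j, Gbar.Adj i j → ¬ (skeleton E).Adj i j → removable i j)
    (hone : ∀ i j k, Gbar.Adj i j → Gbar.Adj j k → Gbar.Adj i k →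
      ((removable i j ∧ ¬ removable j k ∧ ¬ removable i k) ∨
       (¬ removable i j ∧ removable j k ∧ ¬ removable i k) ∨
       (¬ removable i j ∧ ¬ removable j k ∧ removable i k)))
    (htri : ∀ i j, Gbar.Adj i j → ¬ (skeleton E).Adj i j →
      ∃ k, Gbar.Adj i k ∧ Gbar.Adj j k) :
    ∀ i j, (Gbar.Adj i j ∧
        ¬ (removable i j ∧ ∃ k, Gbar.Adj i k ∧ Gbar.Adj j k)) ↔
      (skeleton E).Adj i j :=
  adj_and_not_removable_in_triangle_iff hTF hlow hfp hone htri

/-- Abstract edge-removal procedure: if every edge of `Ḡ` not in the skeleton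
is removable, exactly one edge of each triangle of `Ḡ` is removable, and every
non-skeleton edge of `Ḡ` lies in a triangle of `Ḡ`, then deleting from `Ḡ` the
removable edges lying in triangles yields exactly the skeleton of `G`. -/
theorem stmt_14 {V : Type*} (E : V → V → Prop) (Gbar : SimpleGraph V)
    (removable : V → V → Prop)
    (hNC : No2Cycles E) (hTF : TriFree (skeleton E))
    (hlow : skeleton E ≤ Gbar) (hup : Gbar ≤ moral E)
    (hfp : ∀ i j, Gbar.Adj i j → ¬ (skeleton E).Adj i j → removable i j)
    (hone : ∀ i j k, Gbar.Adj i j → Gbar.Adj j k → Gbar.Adj i k →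
      ((removable i j ∧ ¬ removable j k ∧ ¬ removable i k) ∨
       (¬ removable i j ∧ removable j k ∧ ¬ removable i k) ∨
       (¬ removable i j ∧ ¬ removable j k ∧ removable i k)))
    (htri : ∀ i j, Gbar.Adj i j → ¬ (skeleton E).Adj i j →
      ∃ k, Gbar.Adj i k ∧ Gbar.Adj j k) :
    ∀ i j, (Gbar.Adj i j ∧
        ¬ (removable i j ∧ ∃ k, Gbar.Adj i k ∧ Gbar.Adj j k)) ↔
      (skeleton E).Adj i j :=
  stmt_14_general E Gbar removable hTF hlow hfp hone htri
end
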